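/- arXiv:2507.14073 — 4 statements merged into one kernel-verified Lean document; each statement's English description precedes it below -/
import Mathlib

section
/- Suppose the pair (v, w) is feasible for the outer LP, i.e.: (i) ∂v/∂t(t,x) + y·∇ₓv(t,x) ≤ 0 for all t ∈ [0,T], x ∈ X, y ∈ F(x); (ii) w(x) ≥ v(0,x) + 1 for all x ∈ X; (iii) v(T,x) ≥ 0 for all x ∈ X_T; (iv) w(x) ≥ 0 for all x ∈ X. Then X₀ ⊆ {x ∈ X : v(0,x) ≥ 0} ⊆ {x ∈ X : w(x) ≥ 1}; in particular the set {x ∈ X : w(x) ≥ 1} is an outer approximation of the data-driven region of attraction X₀. -/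
/-- An admissible trajectory from `x₀` on `[0,T]`: a differentiable function with
`x(0) = x₀` and `ẋ(t) ∈ F(x(t))` for all `t ∈ [0,T]`, where
`F(x) = ⋂ᵢ {y : ‖y − yᵢ‖ ≤ M‖x − xᵢ‖}`. -/
def IsAdmissible {n N : ℕ} (M T : ℝ) (xd yd : Fin N → EuclideanSpace ℝ (Fin n))
    (x₀ : EuclideanSpace ℝ (Fin n)) (traj : ℝ → EuclideanSpace ℝ (Fin n)) : Prop :=
  traj 0 = x₀ ∧
  ∃ traj' : ℝ → EuclideanSpace ℝ (Fin n),
    (∀ t ∈ Set.Icc (0 : ℝ) T, HasDerivAt traj (traj' t) t) ∧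
    (∀ t ∈ Set.Icc (0 : ℝ) T, ∀ i : Fin N, ‖traj' t - yd i‖ ≤ M * ‖traj t - xd i‖)

/-- The data-driven region of attraction `X₀`. -/
def dataROA {n N : ℕ} (M T : ℝ) (xd yd : Fin N → EuclideanSpace ℝ (Fin n))
    (X XT : Set (EuclideanSpace ℝ (Fin n))) : Set (EuclideanSpace ℝ (Fin n)) :=
  {x₀ ∈ X | ∃ traj : ℝ → EuclideanSpace ℝ (Fin n),
    IsAdmissible M T xd yd x₀ traj ∧
    (∀ t ∈ Set.Icc (0 : ℝ) T, traj t ∈ X) ∧ traj T ∈ XT}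

/-! A feasible `v` cannot increase along an admissible trajectory that stays in `X`, by the Lie
derivative constraint (i). Such a trajectory from `x₀` ends in `X_T`, where `v(T, ·) ≥ 0` by
(iii), so `v(0, x₀) ≥ 0`; the second inclusion is constraint (ii). -/

section AlongCurve

variable {E : Type*} [NormedAddCommGroup E] [NormedSpace ℝ E]

theorem DifferentiableAt.hasDerivAt_comp_graph {v : ℝ × E → ℝ} {γ : ℝ → E} {γ' : E} {t : ℝ}
    (hv : DifferentiableAt ℝ v (t, γ t)) (hγ : HasDerivAt γ γ' t) :
    HasDerivAt (fun s => v (s, γ s)) (fderiv ℝ v (t, γ t) (1, γ')) t :=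
  hv.hasFDerivAt.comp_hasDerivAt t ((hasDerivAt_id t).prodMk hγ)

theorem le_of_fderiv_along_graph_nonpos {v : ℝ × E → ℝ} {γ γ' : ℝ → E} {a b : ℝ}
    (hab : a ≤ b) (hv : ∀ t ∈ Set.Icc a b, DifferentiableAt ℝ v (t, γ t))
    (hγ : ∀ t ∈ Set.Icc a b, HasDerivAt γ (γ' t) t)
    (hlie : ∀ t ∈ Set.Icc a b, fderiv ℝ v (t, γ t) (1, γ' t) ≤ 0) :
    v (b, γ b) ≤ v (a, γ a) := by
  have hderiv : ∀ t ∈ Set.Icc a b,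
      HasDerivAt (fun s => v (s, γ s)) (fderiv ℝ v (t, γ t) (1, γ' t)) t :=
    fun t ht => (hv t ht).hasDerivAt_comp_graph (hγ t ht)
  exact antitoneOn_of_hasDerivWithinAt_nonpos (convex_Icc a b)
    (fun t ht => (hderiv t ht).continuousAt.continuousWithinAt)
    (fun t ht => (hderiv t (interior_subset ht)).hasDerivWithinAt)
    (fun t ht => hlie t (interior_subset ht))
    (Set.left_mem_Icc.2 hab) (Set.right_mem_Icc.2 hab) hab

end AlongCurve

theorem outer_LP_gives_outer_approximation_general (n N : ℕ)
    (M T : ℝ) (hT : 0 < T)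
    (xd yd : Fin N → EuclideanSpace ℝ (Fin n))
    (X XT : Set (EuclideanSpace ℝ (Fin n)))
    (v : ℝ × EuclideanSpace ℝ (Fin n) → ℝ) (hv : ContDiff ℝ 1 v)
    (w : EuclideanSpace ℝ (Fin n) → ℝ)
    -- (i) Lie derivative constraint
    (hLie : ∀ t ∈ Set.Icc (0 : ℝ) T, ∀ x ∈ X, ∀ y : EuclideanSpace ℝ (Fin n),
      (∀ i : Fin N, ‖y - yd i‖ ≤ M * ‖x - xd i‖) →
      fderiv ℝ v (t, x) (1, y) ≤ 0)
    -- (ii)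
    (hwv : ∀ x ∈ X, w x ≥ v (0, x) + 1)
    -- (iii)
    (hvT : ∀ x ∈ XT, v (T, x) ≥ 0) :
    dataROA M T xd yd X XT ⊆ {x ∈ X | v (0, x) ≥ 0} ∧
    {x ∈ X | v (0, x) ≥ 0} ⊆ {x ∈ X | w x ≥ 1} := by
  refine ⟨?_, fun x ⟨hxX, hvx⟩ => ⟨hxX, by linarith [hwv x hxX]⟩⟩
  rintro x₀ ⟨hx₀X, traj, ⟨rfl, traj', hderiv, hF⟩, hstay, hend⟩
  have hmono : v (T, traj T) ≤ v (0, traj 0) :=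
    le_of_fderiv_along_graph_nonpos hT.le
      (fun t _ => hv.differentiable one_ne_zero _) hderiv
      (fun t ht => hLie t ht _ (hstay t ht) _ (hF t ht))
  exact ⟨hx₀X, (hvT _ hend).trans hmono⟩

/-- if `(v,w)` is feasible for the outer LP, then
`X₀ ⊆ {x ∈ X : v(0,x) ≥ 0} ⊆ {x ∈ X : w(x) ≥ 1}`. -/
theorem outer_LP_gives_outer_approximation (n N : ℕ) (hn : 0 < n) (hN : 0 < N)
    (M T : ℝ) (hM : 0 < M) (hT : 0 < T)
    (xd yd : Fin N → EuclideanSpace ℝ (Fin n))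
    (X XT : Set (EuclideanSpace ℝ (Fin n)))
    (hX : IsCompact X) (hXT : IsCompact XT) (hsub : XT ⊆ X)
    (v : ℝ × EuclideanSpace ℝ (Fin n) → ℝ) (hv : ContDiff ℝ 1 v)
    (w : EuclideanSpace ℝ (Fin n) → ℝ) (hw : Continuous w)
    -- (i) Lie derivative constraint
    (hLie : ∀ t ∈ Set.Icc (0 : ℝ) T, ∀ x ∈ X, ∀ y : EuclideanSpace ℝ (Fin n),
      (∀ i : Fin N, ‖y - yd i‖ ≤ M * ‖x - xd i‖) →
      fderiv ℝ v (t, x) (1, y) ≤ 0)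
    -- (ii)
    (hwv : ∀ x ∈ X, w x ≥ v (0, x) + 1)
    -- (iii)
    (hvT : ∀ x ∈ XT, v (T, x) ≥ 0)
    -- (iv)
    (hw0 : ∀ x ∈ X, w x ≥ 0) :
    dataROA M T xd yd X XT ⊆ {x ∈ X | v (0, x) ≥ 0} ∧
    {x ∈ X | v (0, x) ≥ 0} ⊆ {x ∈ X | w x ≥ 1} :=
  outer_LP_gives_outer_approximation_general n N M T hT xd yd X XT v hv w hLie hwv hvT
end

section
/- Suppose the pair (v, w) is feasible for the inner LP, i.e.: (i) ∂v/∂t(t,x) + y·∇ₓv(t,x) ≤ 0 for all t ∈ [0,T], x ∈ X, y ∈ F(x); (ii) w(x) ≥ v(0,x) + 1 for all x ∈ X; (iii) v(T,x) ≥ 0 for all x ∈ X \ X_T; (iv) w(x) ≥ 0 for all x ∈ X; (v) v(t,x) ≥ 0 for all t ∈ [0,T] and x ∈ ∂X. Then every point x₀ in the topological interior of X with w(x₀) < 1 belongs to the worst-case region of attraction X₀⋆; that is, every admissible trajectory from x₀ satisfies x(t) ∈ X for all t ∈ [0,T] and x(T) ∈ X_T. -/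
/-- The worst-case region of attraction `X₀⋆`. -/
def worstCaseROA {n N : ℕ} (M T : ℝ) (xd yd : Fin N → EuclideanSpace ℝ (Fin n))
    (X XT : Set (EuclideanSpace ℝ (Fin n))) : Set (EuclideanSpace ℝ (Fin n)) :=
  {x₀ ∈ X | ∀ traj : ℝ → EuclideanSpace ℝ (Fin n),
    IsAdmissible M T xd yd x₀ traj →
    (∀ t ∈ Set.Icc (0 : ℝ) T, traj t ∈ X) ∧ traj T ∈ XT}

open Set

theorem ContinuousOn.mapsTo_of_notMem_frontier {α : Type*} [TopologicalSpace α] {γ : ℝ → α}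
    {a b : ℝ} {U : Set α} (hU : IsOpen U) (hγ : ContinuousOn γ (Icc a b)) (ha : γ a ∈ U)
    (hfr : ∀ τ ∈ Ioc a b, (∀ u ∈ Ico a τ, γ u ∈ U) → γ τ ∉ frontier U) :
    MapsTo γ (Icc a b) U := by
  intro t ht
  by_contra htU
  set s := Icc a b ∩ γ ⁻¹' Uᶜ
  have hbdd : BddBelow s := ⟨a, fun u hu => hu.1.1⟩
  have hs : IsClosed s := hγ.preimage_isClosed_of_isClosed isClosed_Icc hU.isClosed_compl
  have hτ : sInf s ∈ s := hs.csInf_mem ⟨t, ht, htU⟩ hbdd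
  set τ := sInf s
  have haτ : a < τ := lt_of_le_of_ne hτ.1.1 fun h => hτ.2 (h ▸ ha)
  have hbefore : ∀ u ∈ Ico a τ, γ u ∈ U := fun u hu => by
    by_contra hu'
    exact notMem_of_lt_csInf hu.2 hbdd ⟨⟨hu.1, hu.2.le.trans hτ.1.2⟩, hu'⟩
  have hclosure : γ τ ∈ closure U := by
    have hτcl : τ ∈ closure (Ico a τ) := by
      rw [closure_Ico haτ.ne]
      exact right_mem_Icc.2 haτ.le
    have hcont : ContinuousWithinAt γ (Ico a τ) τ :=
      (hγ τ hτ.1).mono (Ico_subset_Icc_self.trans (Icc_subset_Icc_right hτ.1.2))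
    exact closure_mono (image_subset_iff.2 hbefore) (hcont.mem_closure_image hτcl)
  exact hfr τ ⟨haτ, hτ.1.2⟩ hbefore (hU.frontier_eq ▸ ⟨hclosure, hτ.2⟩)

theorem apply_graph_le_of_fderiv_nonpos {E : Type*} [NormedAddCommGroup E] [NormedSpace ℝ E]
    {v : ℝ × E → ℝ} (hv : Differentiable ℝ v) {γ γ' : ℝ → E} {a b : ℝ} (hab : a ≤ b)
    (hγ : ∀ s ∈ Icc a b, HasDerivAt γ (γ' s) s)
    (hdec : ∀ s ∈ Ioo a b, fderiv ℝ v (s, γ s) (1, γ' s) ≤ 0) :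
    v (b, γ b) ≤ v (a, γ a) := by
  have hderiv : ∀ s ∈ Icc a b,
      HasDerivAt (fun r => v (r, γ r)) (fderiv ℝ v (s, γ s) (1, γ' s)) s := fun s hs =>
    (hv (s, γ s)).hasFDerivAt.comp_hasDerivAt s ((hasDerivAt_id s).prodMk (hγ s hs))
  have hanti : AntitoneOn (fun r => v (r, γ r)) (Icc a b) := by
    refine antitoneOn_of_hasDerivWithinAt_nonpos
      (f' := fun s => fderiv ℝ v (s, γ s) (1, γ' s)) (convex_Icc a b)
      (fun s hs => (hderiv s hs).continuousAt.continuousWithinAt) (fun s hs => ?_) ?_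
    · rw [interior_Icc] at hs
      exact (hderiv s (Ioo_subset_Icc_self hs)).hasDerivWithinAt
    · simpa only [interior_Icc] using hdec
  exact hanti (left_mem_Icc.2 hab) (right_mem_Icc.2 hab) hab

theorem inner_LP_gives_inner_approximation_general (n N : ℕ)
    (M T : ℝ) (hT : 0 < T)
    (xd yd : Fin N → EuclideanSpace ℝ (Fin n))
    (X XT : Set (EuclideanSpace ℝ (Fin n)))
    (v : ℝ × EuclideanSpace ℝ (Fin n) → ℝ) (hv : ContDiff ℝ 1 v)
    (w : EuclideanSpace ℝ (Fin n) → ℝ)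
    -- (i) Lie derivative constraint
    (hLie : ∀ t ∈ Set.Icc (0 : ℝ) T, ∀ x ∈ X, ∀ y : EuclideanSpace ℝ (Fin n),
      (∀ i : Fin N, ‖y - yd i‖ ≤ M * ‖x - xd i‖) →
      fderiv ℝ v (t, x) (1, y) ≤ 0)
    -- (ii)
    (hwv : ∀ x ∈ X, w x ≥ v (0, x) + 1)
    -- (iii)
    (hvT : ∀ x ∈ X \ XT, v (T, x) ≥ 0)
    -- (v)
    (hvb : ∀ t ∈ Set.Icc (0 : ℝ) T, ∀ x ∈ frontier X, v (t, x) ≥ 0) :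
    ∀ x₀ ∈ interior X, w x₀ < 1 → x₀ ∈ worstCaseROA M T xd yd X XT := by
  intro x₀ hx₀ hwx₀
  refine ⟨interior_subset hx₀, fun γ ⟨hγ0, γ', hγ', hF⟩ => ?_⟩
  have hv0 : v (0, x₀) < 0 := by linarith [hwv x₀ (interior_subset hx₀)]
  have hneg : ∀ τ ∈ Icc 0 T, (∀ u ∈ Ico 0 τ, γ u ∈ interior X) → v (τ, γ τ) < 0 := by
    intro τ hτ hbefore
    have hsub : Icc 0 τ ⊆ Icc 0 T := Icc_subset_Icc_right hτ.2
    refine (apply_graph_le_of_fderiv_nonpos (hv.differentiable one_ne_zero) hτ.1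
      (fun s hs => hγ' s (hsub hs)) fun s hs => ?_).trans_lt (hγ0 ▸ hv0)
    have hsT : s ∈ Icc 0 T := hsub (Ioo_subset_Icc_self hs)
    exact hLie s hsT _ (interior_subset (hbefore s (Ioo_subset_Ico_self hs))) _ (hF s hsT)
  have hinside : MapsTo γ (Icc 0 T) (interior X) := by
    refine ContinuousOn.mapsTo_of_notMem_frontier isOpen_interior
      (fun t ht => (hγ' t ht).continuousAt.continuousWithinAt) (hγ0 ▸ hx₀)
      fun τ hτ hbefore hfr => ?_
    linarith [hvb τ (Ioc_subset_Icc_self hτ) _ (frontier_interior_subset hfr),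
      hneg τ (Ioc_subset_Icc_self hτ) hbefore]
  refine ⟨fun t ht => interior_subset (hinside ht), ?_⟩
  by_contra hXT
  have hTmem : T ∈ Icc 0 T := right_mem_Icc.2 hT.le
  linarith [hvT _ ⟨interior_subset (hinside hTmem), hXT⟩,
    hneg T hTmem fun u hu => hinside (Ico_subset_Icc_self hu)]

/-- if `(v,w)` is feasible for the inner LP, then every point of the
interior of `X` with `w(x₀) < 1` belongs to the worst-case region of attraction
`X₀⋆`: every admissible trajectory from `x₀` stays in `X` on `[0,T]` and ends in
`X_T` at time `T`. -/
theorem inner_LP_gives_inner_approximation (n N : ℕ) (hn : 0 < n) (hN : 0 < N)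
    (M T : ℝ) (hM : 0 < M) (hT : 0 < T)
    (xd yd : Fin N → EuclideanSpace ℝ (Fin n))
    (X XT : Set (EuclideanSpace ℝ (Fin n)))
    (hX : IsCompact X) (hXT : IsCompact XT) (hsub : XT ⊆ X)
    (v : ℝ × EuclideanSpace ℝ (Fin n) → ℝ) (hv : ContDiff ℝ 1 v)
    (w : EuclideanSpace ℝ (Fin n) → ℝ) (hw : Continuous w)
    -- (i) Lie derivative constraint
    (hLie : ∀ t ∈ Set.Icc (0 : ℝ) T, ∀ x ∈ X, ∀ y : EuclideanSpace ℝ (Fin n),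
      (∀ i : Fin N, ‖y - yd i‖ ≤ M * ‖x - xd i‖) →
      fderiv ℝ v (t, x) (1, y) ≤ 0)
    -- (ii)
    (hwv : ∀ x ∈ X, w x ≥ v (0, x) + 1)
    -- (iii)
    (hvT : ∀ x ∈ X \ XT, v (T, x) ≥ 0)
    -- (iv)
    (hw0 : ∀ x ∈ X, w x ≥ 0)
    -- (v)
    (hvb : ∀ t ∈ Set.Icc (0 : ℝ) T, ∀ x ∈ frontier X, v (t, x) ≥ 0) :
    ∀ x₀ ∈ interior X, w x₀ < 1 → x₀ ∈ worstCaseROA M T xd yd X XT :=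
  inner_LP_gives_inner_approximation_general n N M T hT xd yd X XT v hv w hLie hwv hvT hvb
end

section
/- One inclusion of the complement formula for the worst-case region of attraction: let x₀ be a point of the topological interior of X with x₀ ∉ X₀⋆. Then either x₀ ∈ X̃₀ (there is an admissible trajectory from x₀ staying in X on [0,T] with x(T) ∈ X \ X_T), or there exists τ ∈ (0,T) with x₀ ∈ X̃_τ^∂ (there is an admissible trajectory from x₀ staying in X on [0,τ] with x(τ) ∈ ∂X). In other words, (interior X) \ X₀⋆ ⊆ X̃₀ ∪ ⋃_{0<τ<T} X̃_τ^∂. -/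
/-- `X̃₀`: the data-driven region of attraction with target `X \ X_T`. -/
def tildeROA {n N : ℕ} (M T : ℝ) (xd yd : Fin N → EuclideanSpace ℝ (Fin n))
    (X XT : Set (EuclideanSpace ℝ (Fin n))) : Set (EuclideanSpace ℝ (Fin n)) :=
  {x₀ ∈ X | ∃ traj : ℝ → EuclideanSpace ℝ (Fin n),
    IsAdmissible M T xd yd x₀ traj ∧
    (∀ t ∈ Set.Icc (0 : ℝ) T, traj t ∈ X) ∧ traj T ∈ X \ XT}

/-- `X̃_τ^∂`: initial conditions of trajectories staying in `X` on `[0,τ]` and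
hitting the boundary `∂X` at time `τ`. -/
def tildeBoundaryROA {n N : ℕ} (M : ℝ) (τ : ℝ) (xd yd : Fin N → EuclideanSpace ℝ (Fin n))
    (X : Set (EuclideanSpace ℝ (Fin n))) : Set (EuclideanSpace ℝ (Fin n)) :=
  {x₀ ∈ X | ∃ traj : ℝ → EuclideanSpace ℝ (Fin n),
    IsAdmissible M τ xd yd x₀ traj ∧
    (∀ t ∈ Set.Icc (0 : ℝ) τ, traj t ∈ X) ∧ traj τ ∈ frontier X}

/-- one inclusion of the complement formula:
`(interior X) \ X₀⋆ ⊆ X̃₀ ∪ ⋃_{0<τ<T} X̃_τ^∂`. -/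
theorem complement_formula_inclusion (n N : ℕ) (hn : 0 < n) (hN : 0 < N)
    (M T : ℝ) (hM : 0 < M) (hT : 0 < T)
    (xd yd : Fin N → EuclideanSpace ℝ (Fin n))
    (X XT : Set (EuclideanSpace ℝ (Fin n)))
    (hX : IsCompact X) (hXT : IsCompact XT) (hsub : XT ⊆ X) :
    interior X \ worstCaseROA M T xd yd X XT ⊆
      tildeROA M T xd yd X XT ∪
      ⋃ τ ∈ Set.Ioo (0 : ℝ) T, tildeBoundaryROA M τ xd yd X := by
  intro x₀ hx₀
  obtain ⟨hxi, hxn⟩ := hx₀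
  have hxX : x₀ ∈ X := interior_subset hxi
  have hXcl : IsClosed X := hX.isClosed
  have hnot : ¬ ∀ traj : ℝ → EuclideanSpace ℝ (Fin n),
      IsAdmissible M T xd yd x₀ traj →
      (∀ t ∈ Set.Icc (0 : ℝ) T, traj t ∈ X) ∧ traj T ∈ XT :=
    fun h => hxn ⟨hxX, h⟩
  push_neg at hnot
  obtain ⟨traj, hadm, hbad⟩ := hnot
  obtain ⟨h0, traj', hD, hF⟩ := hadm
  by_cases hin : ∀ t ∈ Set.Icc (0 : ℝ) T, traj t ∈ X
  · left
    exact ⟨hxX, traj, ⟨h0, traj', hD, hF⟩, hin,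
      hin T ⟨le_of_lt hT, le_refl T⟩, fun hXT' => (hbad hin) hXT'⟩
  · right
    push_neg at hin
    obtain ⟨t₀, ht₀T, ht₀X⟩ := hin
    set S : Set ℝ := {t | t ∈ Set.Icc (0 : ℝ) T ∧ traj t ∉ X} with hSdef
    have hSne : S.Nonempty := ⟨t₀, ht₀T, ht₀X⟩
    have hSbdd : BddBelow S := ⟨0, fun t ht => ht.1.1⟩
    set τ : ℝ := sInf S with hτdef
    have hτ0 : 0 ≤ τ := le_csInf hSne (fun t ht => ht.1.1)
    have hτT : τ ≤ T := le_trans (csInf_le hSbdd hSne.choose_spec) hSne.choose_spec.1.2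
    -- continuity of traj at points of [0,T]
    have hcont : ∀ t ∈ Set.Icc (0 : ℝ) T, ContinuousAt traj t :=
      fun t ht => (hD t ht).continuousAt
    -- traj t ∈ X for t ∈ [0, τ)
    have hbefore : ∀ t, 0 ≤ t → t < τ → traj t ∈ X := by
      intro t ht0 htτ
      by_contra hc
      exact absurd (csInf_le hSbdd ⟨⟨ht0, le_of_lt (lt_of_lt_of_le htτ hτT)⟩, hc⟩)
        (not_le.mpr htτ)
    -- τ > 0
    have hτpos : 0 < τ := by
      have hc0 : ContinuousAt traj 0 := hcont 0 ⟨le_refl 0, le_of_lt hT⟩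
      have hmem : traj ⁻¹' (interior X) ∈ nhds (0 : ℝ) := by
        apply hc0.preimage_mem_nhds
        rw [h0]
        exact isOpen_interior.mem_nhds hxi
      obtain ⟨ε, hε, hball⟩ := Metric.mem_nhds_iff.mp hmem
      have hεle : ε ≤ τ := by
        apply le_csInf hSne
        intro t ht
        by_contra hlt
        push_neg at hlt
        have : t ∈ Metric.ball (0 : ℝ) ε := by
          rw [Metric.mem_ball, Real.dist_eq, sub_zero, abs_of_nonneg ht.1.1]
          exact hlt
        exact ht.2 (interior_subset (hball this))
      exact lt_of_lt_of_le hε hεle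
    have hτIcc : τ ∈ Set.Icc (0 : ℝ) T := ⟨hτ0, hτT⟩
    -- traj τ ∈ X
    have hτX : traj τ ∈ X := by
      have hcw : ContinuousWithinAt traj (Set.Ico 0 τ) τ :=
        (hcont τ hτIcc).continuousWithinAt
      have hτcl : τ ∈ closure (Set.Ico (0 : ℝ) τ) := by
        rw [closure_Ico (ne_of_lt hτpos)]
        exact ⟨hτ0, le_refl τ⟩
      have := hcw.mem_closure_image hτcl
      have hsub2 : traj '' Set.Ico 0 τ ⊆ X := by
        rintro _ ⟨t, ⟨ht0, htτ⟩, rfl⟩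
        exact hbefore t ht0 htτ
      have : traj τ ∈ closure X := closure_mono hsub2 this
      rwa [hXcl.closure_eq] at this
    have hτnS : τ ∉ S := fun h => h.2 hτX
    -- τ < T
    have hτltT : τ < T := by
      rcases lt_or_eq_of_le hτT with h | h
      · exact h
      · exfalso
        obtain ⟨t, ht⟩ := hSne
        have h1 : τ ≤ t := csInf_le hSbdd ht
        have h2 : t ≤ T := ht.1.2
        have : t = τ := le_antisymm (h ▸ h2) h1
        exact hτnS (this ▸ ht)
    -- traj τ ∈ frontier X
    have hfront : traj τ ∈ frontier X := by
      rw [hXcl.frontier_eq]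
      refine ⟨hτX, fun hint => ?_⟩
      have hcτ : ContinuousAt traj τ := hcont τ hτIcc
      have hmem : traj ⁻¹' (interior X) ∈ nhds τ :=
        hcτ.preimage_mem_nhds (isOpen_interior.mem_nhds hint)
      obtain ⟨δ, hδ, hball⟩ := Metric.mem_nhds_iff.mp hmem
      have : τ + δ ≤ τ := by
        apply le_csInf hSne
        intro t ht
        by_contra hlt
        push_neg at hlt
        have hτt : τ ≤ t := csInf_le hSbdd ht
        have : t ∈ Metric.ball τ δ := by
          rw [Metric.mem_ball, Real.dist_eq, abs_of_nonneg (by linarith)]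
          linarith
        exact ht.2 (interior_subset (hball this))
      linarith
    -- conclude
    refine Set.mem_biUnion (show τ ∈ Set.Ioo (0:ℝ) T from ⟨hτpos, hτltT⟩) ?_
    refine ⟨hxX, traj, ⟨h0, traj', ?_, ?_⟩, ?_, hfront⟩
    · exact fun t ht => hD t ⟨ht.1, le_trans ht.2 hτT⟩
    · exact fun t ht i => hF t ⟨ht.1, le_trans ht.2 hτT⟩ i
    · intro t ht
      rcases lt_or_eq_of_le ht.2 with h | h
      · exact hbefore t ht.1 h
      · exact h ▸ hτX
end

section
/- The two-dimensional vector field f₀ : ℝ² → ℝ² given by f₀(x) = 2x(‖x‖² − 0.25) if ‖x‖ ≤ 0.5 and f₀(x) = x(1 − 1/(2‖x‖)) if ‖x‖ > 0.5, is Lipschitz continuous on the square X = [−0.8, 0.8]² with Lipschitz constant 1. -/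
/-- The two-dimensional example dynamics of the paper:
`f₀(x) = 2x(‖x‖² − 0.25)` if `‖x‖ ≤ 0.5` and `f₀(x) = x(1 − 1/(2‖x‖))` otherwise. -/
noncomputable def f0 (x : EuclideanSpace ℝ (Fin 2)) : EuclideanSpace ℝ (Fin 2) :=
  if ‖x‖ ≤ 0.5 then (2 * (‖x‖ ^ 2 - 0.25)) • x
  else (1 - 1 / (2 * ‖x‖)) • x

/-! `f₀(x) = φ(‖x‖) • x` is radial. A radial map is 1-Lipschitz as soon as `|φ| ≤ 1` and its
radial gain `r ↦ r φ(r)` is 1-Lipschitz on `[0, ∞)`. For `f₀` the gain is `2r³ - r/2` on `[0, 1/2]`,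
with slope `6r² - 1/2 ∈ [-1/2, 1]`, and `r - 1/2` beyond; the two pieces meet at `1/2`. -/

open Set RealInnerProductSpace

theorem LipschitzOnWith.union_of_isGreatest_of_isLeast {α : Type*} [PseudoMetricSpace α]
    {f : ℝ → α} {K : NNReal} {s t : Set ℝ} {c : ℝ} (hs : LipschitzOnWith K f s)
    (ht : LipschitzOnWith K f t) (hsc : IsGreatest s c) (htc : IsLeast t c) :
    LipschitzOnWith K f (s ∪ t) := by
  have glue : ∀ x ∈ s, ∀ y ∈ t, dist (f x) (f y) ≤ K * dist x y := fun x hx y hy => by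
    have hxc : x ≤ c := hsc.2 hx
    have hcy : c ≤ y := htc.2 hy
    calc dist (f x) (f y) ≤ dist (f x) (f c) + dist (f c) (f y) := dist_triangle _ _ _
      _ ≤ K * dist x c + K * dist c y :=
        add_le_add (hs.dist_le_mul x hx c hsc.1) (ht.dist_le_mul c htc.1 y hy)
      _ = K * dist x y := by
        rw [Real.dist_eq, Real.dist_eq, Real.dist_eq, abs_of_nonpos (by linarith),
          abs_of_nonpos (by linarith), abs_of_nonpos (by linarith)]
        ring
  refine LipschitzOnWith.of_dist_le_mul fun x hx y hy => ?_
  rcases hx with hx | hx <;> rcases hy with hy | hy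
  · exact hs.dist_le_mul x hx y hy
  · exact glue x hx y hy
  · rw [dist_comm, dist_comm x]
    exact glue y hy x hx
  · exact ht.dist_le_mul x hx y hy

section RadialMap

variable {E : Type*} [NormedAddCommGroup E] [InnerProductSpace ℝ E]

/-- When `α * β ≤ 1`, the excess `‖α • a - β • b‖² - ‖a - b‖²` is nondecreasing in `⟪a, b⟫`,
so it is largest when `a` and `b` point in the same direction. -/
theorem norm_smul_sub_smul_le_norm_sub {a b : E} {α β : ℝ} (hαβ : α * β ≤ 1)
    (h : |α * ‖a‖ - β * ‖b‖| ≤ |‖a‖ - ‖b‖|) : ‖α • a - β • b‖ ≤ ‖a - b‖ := by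
  have hcs : ⟪a, b⟫ ≤ ‖a‖ * ‖b‖ := real_inner_le_norm a b
  have hsq : (α * ‖a‖ - β * ‖b‖) ^ 2 ≤ (‖a‖ - ‖b‖) ^ 2 := sq_le_sq.2 h
  refine (pow_le_pow_iff_left₀ (norm_nonneg _) (norm_nonneg _) two_ne_zero).1 ?_
  rw [norm_sub_sq_real, norm_sub_sq_real, norm_smul, norm_smul, real_inner_smul_left,
    real_inner_smul_right, Real.norm_eq_abs, Real.norm_eq_abs, mul_pow, mul_pow, sq_abs, sq_abs]
  nlinarith [mul_nonneg (sub_nonneg.2 hαβ) (sub_nonneg.2 hcs)]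

theorem lipschitzWith_one_smul_self_of_radial {φ : ℝ → ℝ} (hφ : ∀ r, 0 ≤ r → |φ r| ≤ 1)
    (hgain : LipschitzOnWith 1 (fun r => r * φ r) (Ici 0)) :
    LipschitzWith 1 (fun x : E => φ ‖x‖ • x) := by
  refine lipschitzWith_iff_norm_sub_le.2 fun a b => ?_
  have hαβ : φ ‖a‖ * φ ‖b‖ ≤ 1 :=
    (le_abs_self _).trans <| (abs_mul _ _).trans_le <|
      mul_le_one₀ (hφ _ (norm_nonneg a)) (abs_nonneg _) (hφ _ (norm_nonneg b))
  have hab := lipschitzOnWith_iff_norm_sub_le.1 hgain (mem_Ici.2 (norm_nonneg a))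
    (mem_Ici.2 (norm_nonneg b))
  rw [NNReal.coe_one, one_mul, Real.norm_eq_abs, Real.norm_eq_abs, mul_comm ‖a‖,
    mul_comm ‖b‖] at hab
  rw [NNReal.coe_one, one_mul]
  exact norm_smul_sub_smul_le_norm_sub hαβ hab

end RadialMap

noncomputable def f0Profile (r : ℝ) : ℝ :=
  if r ≤ 0.5 then 2 * (r ^ 2 - 0.25) else 1 - 1 / (2 * r)

theorem f0_eq_f0Profile_smul (x : EuclideanSpace ℝ (Fin 2)) : f0 x = f0Profile ‖x‖ • x :=
  (ite_smul _ _ _ _).symm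

theorem abs_f0Profile_le_one {r : ℝ} (hr : 0 ≤ r) : |f0Profile r| ≤ 1 := by
  unfold f0Profile
  split_ifs with h
  · exact abs_le.2 ⟨by nlinarith, by nlinarith⟩
  · have hr' : 1 / 2 < r := by norm_num at h; linarith
    have h0 : 0 < 1 / (2 * r) := by positivity
    have h1 : 1 / (2 * r) < 1 := by rw [div_lt_one (by linarith)]; linarith
    exact abs_le.2 ⟨by linarith, by linarith⟩

theorem mul_f0Profile_of_le {r : ℝ} (hr : r ≤ 1 / 2) : r * f0Profile r = 2 * r ^ 3 - r / 2 := by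
  rw [f0Profile, if_pos (by norm_num; linarith)]
  ring

theorem mul_f0Profile_of_ge {r : ℝ} (hr : 1 / 2 ≤ r) : r * f0Profile r = r - 1 / 2 := by
  unfold f0Profile
  split_ifs with h
  · have : r = 1 / 2 := by norm_num at h; linarith
    subst this
    norm_num
  · field_simp

theorem lipschitzOnWith_mul_f0Profile_Icc :
    LipschitzOnWith 1 (fun r => r * f0Profile r) (Icc 0 (1 / 2)) := by
  refine lipschitzOnWith_iff_norm_sub_le.2 fun r hr s hs => ?_
  have hfactor : 2 * r ^ 3 - r / 2 - (2 * s ^ 3 - s / 2)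
      = (r - s) * (2 * (r ^ 2 + r * s + s ^ 2) - 1 / 2) := by ring
  have hslope : |2 * (r ^ 2 + r * s + s ^ 2) - 1 / 2| ≤ 1 := by
    obtain ⟨hr0, hr1⟩ := hr
    obtain ⟨hs0, hs1⟩ := hs
    exact abs_le.2 ⟨by nlinarith [mul_nonneg hr0 hs0], by nlinarith⟩
  simp only [Real.norm_eq_abs, NNReal.coe_one, one_mul]
  rw [mul_f0Profile_of_le hr.2, mul_f0Profile_of_le hs.2, hfactor, abs_mul]
  exact mul_le_of_le_one_right (abs_nonneg _) hslope

theorem lipschitzOnWith_mul_f0Profile_Ici :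
    LipschitzOnWith 1 (fun r => r * f0Profile r) (Ici (1 / 2)) := by
  refine lipschitzOnWith_iff_norm_sub_le.2 fun r hr s hs => ?_
  rw [mul_f0Profile_of_ge hr, mul_f0Profile_of_ge hs, NNReal.coe_one, one_mul,
    sub_sub_sub_cancel_right]

theorem lipschitzOnWith_mul_f0Profile : LipschitzOnWith 1 (fun r => r * f0Profile r) (Ici 0) := by
  rw [← Icc_union_Ici_eq_Ici (by norm_num : (0 : ℝ) ≤ 1 / 2)]
  exact lipschitzOnWith_mul_f0Profile_Icc.union_of_isGreatest_of_isLeast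
    lipschitzOnWith_mul_f0Profile_Ici (isGreatest_Icc (by norm_num)) isLeast_Ici

/-- `f₀` is Lipschitz continuous on the square `X = [−0.8, 0.8]²`
with Lipschitz constant 1. -/
theorem f0_lipschitz_on_square :
    ∀ a b : EuclideanSpace ℝ (Fin 2),
      (∀ i, a i ∈ Set.Icc (-0.8 : ℝ) 0.8) →
      (∀ i, b i ∈ Set.Icc (-0.8 : ℝ) 0.8) →
      ‖f0 a - f0 b‖ ≤ 1 * ‖a - b‖ := by
  intro a b _ _
  rw [f0_eq_f0Profile_smul, f0_eq_f0Profile_smul]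
  exact_mod_cast (lipschitzWith_one_smul_self_of_radial (fun r => abs_f0Profile_le_one)
    lipschitzOnWith_mul_f0Profile).norm_sub_le a b
end
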